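/- arXiv:math/9910112 — 5 statements merged into one kernel-verified Lean document; each statement's English description precedes it below -/
import Mathlib

section
/- Let A be a *-algebra over C = R(i) where R is an ordered ring, and let ω: A → C be a positive linear functional. Then the Cauchy-Schwarz inequality holds: ω(A*B)·conjugate(ω(A*B)) ≤ ω(A*A)·ω(B*B) for all A, B ∈ A. -/
/-- The ring `C = R(i)` over an ordered ring `R`, axiomatized through its conjugation
`z ↦ z̄`, its imaginary unit `i` (with `i² = -1`), the fact that every element is of the
form `a + i b` with `a, b` real (i.e. conjugation-fixed), and the positive cone `P ⊆ R`
making `R = -P ∪ {0} ∪ P` a disjoint union with `P` closed under `+` and `·`. -/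
structure OrderedScalars (C : Type*) [CommRing C] where
  /-- complex conjugation -/
  conj : C →+* C
  conj_conj : ∀ z : C, conj (conj z) = z
  /-- the imaginary unit -/
  i : C
  i_mul_i : i * i = -1
  conj_i : conj i = -i
  /-- every element is `a + i b` with `a`, `b` real -/
  exists_re_im : ∀ z : C, ∃ a b : C, conj a = a ∧ conj b = b ∧ z = a + i * b
  /-- the positive cone of the ordered ring `R = {z | conj z = z}` -/
  P : Set C
  P_real : ∀ a ∈ P, conj a = a
  P_add : ∀ a ∈ P, ∀ b ∈ P, a + b ∈ P
  P_mul : ∀ a ∈ P, ∀ b ∈ P, a * b ∈ P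
  P_ne_zero : ∀ a ∈ P, a ≠ 0
  P_asymm : ∀ a ∈ P, -a ∉ P
  P_total : ∀ a : C, conj a = a → a ≠ 0 → a ∈ P ∨ -a ∈ P

/-- `a ≥ 0` in `R ⊆ C`. -/
def OrderedScalars.nonneg {C : Type*} [CommRing C] (S : OrderedScalars C) (a : C) : Prop :=
  a ∈ S.P ∨ a = 0


/-- A `*`-algebra over `C = R(i)`: an associative unital `C`-algebra together with a
`C`-antilinear involutive anti-automorphism `st`. -/
structure StarAlgebraOn {C : Type*} [CommRing C] (S : OrderedScalars C)
    (A : Type*) [Ring A] [Algebra C A] where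
  st : A → A
  st_add : ∀ x y : A, st (x + y) = st x + st y
  st_mul : ∀ x y : A, st (x * y) = st y * st x
  st_st : ∀ x : A, st (st x) = x
  st_smul : ∀ (c : C) (x : A), st (c • x) = S.conj c • st x


section Aux
variable {C : Type*} [CommRing C] (S : OrderedScalars C)

lemma aux_nonneg_real {a : C} (ha : S.nonneg a) : S.conj a = a := by
  rcases ha with ha | rfl
  · exact S.P_real a ha
  · simp

lemma aux_nonneg_of_mul_left {k G : C} (hk : k ∈ S.P) (hG : S.conj G = G)
    (hm : S.nonneg (k * G)) : S.nonneg G := by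
  by_cases h0 : G = 0
  · exact Or.inr h0
  rcases S.P_total G hG h0 with hP | hP
  · exact Or.inl hP
  · exfalso
    have h3 : k * -G ∈ S.P := S.P_mul _ hk _ hP
    rcases hm with hm | hm
    · exact S.P_asymm _ hm (by simpa [mul_neg] using h3)
    · exact S.P_ne_zero _ h3 (by simp [mul_neg, hm])

lemma aux_sq_nonneg {a : C} (ha : S.conj a = a) : S.nonneg (a * a) := by
  rcases eq_or_ne a 0 with rfl | h0
  · exact Or.inr (by simp)
  rcases S.P_total a ha h0 with hP | hP
  · exact Or.inl (S.P_mul _ hP _ hP)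
  · exact Or.inl (by simpa using S.P_mul _ hP _ hP)

lemma aux_nonneg_add {a b : C} (ha : S.nonneg a) (hb : S.nonneg b) : S.nonneg (a + b) := by
  rcases ha with ha | rfl
  · rcases hb with hb | rfl
    · exact Or.inl (S.P_add _ ha _ hb)
    · rw [add_zero]; exact Or.inl ha
  · simpa using hb

lemma aux_norm_nonneg (z : C) : S.nonneg (z * S.conj z) := by
  obtain ⟨a, b, ha, hb, rfl⟩ := S.exists_re_im z
  have key : (a + S.i * b) * S.conj (a + S.i * b) = a * a + b * b := by
    simp only [map_add, map_mul, S.conj_i, ha, hb]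
    linear_combination (-(b * b)) * S.i_mul_i
  rw [key]
  exact aux_nonneg_add S (aux_sq_nonneg S ha) (aux_sq_nonneg S hb)

variable {A : Type*} [Ring A] [Algebra C A] (T : StarAlgebraOn S A) (ω : A →ₗ[C] C)

lemma aux_expand4 (x y : A) (c d : C) :
    ω (T.st (c • x + d • y) * (c • x + d • y)) =
      S.conj c * c * ω (T.st x * x) + S.conj c * d * ω (T.st x * y)
      + S.conj d * c * ω (T.st y * x) + S.conj d * d * ω (T.st y * y) := by
  rw [T.st_add, T.st_smul, T.st_smul]
  simp only [add_mul, mul_add, smul_mul_assoc, mul_smul_comm, smul_smul, map_add, map_smul,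
    smul_eq_mul]
  ring


lemma aux_herm (h : C) (h_real : S.conj h = h) (h_half : h + h = 1)
    (hω : ∀ x : A, S.nonneg (ω (T.st x * x))) (x y : A) :
    S.conj (ω (T.st x * y)) = ω (T.st y * x) := by
  set q := ω (T.st x * y) with hq
  set q' := ω (T.st y * x) with hq'
  have e1 := aux_expand4 S T ω x y 1 1
  have e2 := aux_expand4 S T ω x y 1 S.i
  rw [S.conj_i] at e2
  simp only [one_smul, map_one, one_mul, mul_one] at e1 e2
  have hp := aux_nonneg_real S (hω x)
  have hr := aux_nonneg_real S (hω y)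
  have ht1 := aux_nonneg_real S (hω (x + y))
  have ht2 := aux_nonneg_real S (hω (x + S.i • y))
  have hu : S.conj (q + q') = q + q' := by
    have e : q + q' = ω (T.st (x + y) * (x + y)) - ω (T.st x * x) - ω (T.st y * y) := by
      linear_combination -e1
    rw [e, map_sub, map_sub, ht1, hp, hr]
  have hv : S.conj (S.i * q - S.i * q') = S.i * q - S.i * q' := by
    have e : S.i * q - S.i * q'
        = ω (T.st (x + S.i • y) * (x + S.i • y)) - ω (T.st x * x) - ω (T.st y * y) := by
      linear_combination -e2 + ω (T.st y * y) * S.i_mul_i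
    rw [e, map_sub, map_sub, ht2, hp, hr]
  have hq2 : q = h * ((q + q') - S.i * (S.i * q - S.i * q')) := by
    linear_combination (-q) * h_half + (h * (q - q')) * S.i_mul_i
  rw [hq2, map_mul, h_real, map_sub, map_mul, S.conj_i, hu, hv]
  linear_combination q' * h_half + (h * (q - q')) * S.i_mul_i

end Aux

/-- Cauchy–Schwarz inequality: for a positive linear functional `ω` on a
`*`-algebra `A` over `C = R(i)` (with `1/2 ∈ R`) one has
`ω(A*B) conj(ω(A*B)) ≤ ω(A*A) ω(B*B)` for all `A, B ∈ A`. -/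
theorem positive_functional_cauchy_schwarz
    {C : Type*} [CommRing C] [Nontrivial C] (S : OrderedScalars C)
    {A : Type*} [Ring A] [Algebra C A] (T : StarAlgebraOn S A)
    -- `1/2 ∈ R`
    (h : C) (h_real : S.conj h = h) (h_half : h + h = 1)
    (ω : A →ₗ[C] C) (hω : ∀ x : A, S.nonneg (ω (T.st x * x))) :
    ∀ a b : A,
      S.nonneg (ω (T.st a * a) * ω (T.st b * b) - ω (T.st a * b) * S.conj (ω (T.st a * b))) := by
  intro a b
  set p := ω (T.st a * a) with hpdef
  set r := ω (T.st b * b) with hrdef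
  set q := ω (T.st a * b) with hqdef
  have herm := aux_herm S T ω h h_real h_half hω a b
  have hp_real := aux_nonneg_real S (hω a)
  have hr_real := aux_nonneg_real S (hω b)
  have hG_real : S.conj (p * r - q * S.conj q) = p * r - q * S.conj q := by
    rw [map_sub, map_mul, map_mul, S.conj_conj, hp_real, hr_real]
    ring
  rcases hω a with hpP | hp0
  · have key := hω (p • b + (-q) • a)
    rw [aux_expand4 S T ω b a p (-q)] at key
    have e : S.conj p * p * r + S.conj p * -q * ω (T.st b * a)
        + S.conj (-q) * p * q + S.conj (-q) * -q * p
        = p * (p * r - q * S.conj q) := by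
      rw [map_neg, hp_real, ← herm]; ring
    rw [e] at key
    exact aux_nonneg_of_mul_left S hpP hG_real key
  rcases hω b with hrP | hr0
  · have key := hω (r • a + (-(S.conj q)) • b)
    rw [aux_expand4 S T ω a b r (-(S.conj q))] at key
    have e : S.conj r * r * p + S.conj r * -S.conj q * q
        + S.conj (-S.conj q) * r * ω (T.st b * a) + S.conj (-S.conj q) * -S.conj q * r
        = r * (p * r - q * S.conj q) := by
      rw [map_neg, S.conj_conj, hr_real, ← herm]; ring
    rw [e] at key
    exact aux_nonneg_of_mul_left S hrP hG_real key
  · -- degenerate case p = 0, r = 0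
    rw [← hpdef] at hp0
    rw [← hrdef] at hr0
    have key := hω ((1 : C) • a + (-(S.conj q)) • b)
    rw [aux_expand4 S T ω a b 1 (-(S.conj q))] at key
    have e : S.conj 1 * 1 * p + S.conj 1 * -S.conj q * q
        + S.conj (-S.conj q) * 1 * ω (T.st b * a) + S.conj (-S.conj q) * -S.conj q * r
        = -(q * S.conj q + q * S.conj q) := by
      rw [map_neg, map_one, S.conj_conj, ← herm, hp0, hr0]; ring
    rw [e] at key
    have hm : S.nonneg (q * S.conj q) := aux_norm_nonneg S q
    rcases hm with hmP | hm0
    · exfalso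
      have h2 : q * S.conj q + q * S.conj q ∈ S.P := S.P_add _ hmP _ hmP
      rcases key with hk | hk
      · exact S.P_asymm _ h2 hk
      · exact S.P_ne_zero _ h2 (neg_eq_zero.mp hk)
    · right
      rw [hp0, hm0]
      ring
end

section
/- Let Λ(Cⁿ) be the Grassmann algebra over C = R(i) with *-involution determined by 1* = 1 and eᵢ* = eᵢ for the canonical generators. A linear functional ω: Λ(Cⁿ) → C is positive if and only if ω(1) ≥ 0 and ω(e_{i₁} ∧ ... ∧ e_{i_r}) = 0 for all r ≥ 1 and all indices i₁, ..., i_r. -/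
namespace OrderedScalars

variable {C : Type*} [CommRing C] (S : OrderedScalars C)

lemma nn_zero : S.nonneg 0 := Or.inr rfl

lemma nn_add {a b : C} (ha : S.nonneg a) (hb : S.nonneg b) : S.nonneg (a + b) := by
  rcases ha with ha | rfl
  · rcases hb with hb | rfl
    · exact Or.inl (S.P_add a ha b hb)
    · simpa [nonneg] using Or.inl ha
  · simpa using hb

lemma nn_mul {a b : C} (ha : S.nonneg a) (hb : S.nonneg b) : S.nonneg (a * b) := by
  rcases ha with ha | rfl
  · rcases hb with hb | rfl
    · exact Or.inl (S.P_mul a ha b hb)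
    · simp [nonneg]
  · simp [nonneg]

lemma nn_real {a : C} (ha : S.nonneg a) : S.conj a = a := by
  rcases ha with ha | rfl
  · exact S.P_real a ha
  · simp

lemma sq_nn {a : C} (ha : S.conj a = a) : S.nonneg (a * a) := by
  by_cases h0 : a = 0
  · simp [h0, nonneg]
  · rcases S.P_total a ha h0 with hp | hp
    · exact Or.inl (S.P_mul a hp a hp)
    · have := S.P_mul _ hp _ hp
      simpa [nonneg] using Or.inl this

lemma nn_antisymm {a : C} (ha : S.nonneg a) (hb : S.nonneg (-a)) : a = 0 := by
  rcases ha with ha | rfl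
  · rcases hb with hb | hb
    · exact absurd hb (S.P_asymm a ha)
    · simpa using congrArg Neg.neg hb
  · rfl

lemma real_mul_ne {a b : C} (ha : S.conj a = a) (hb : S.conj b = b)
    (ha0 : a ≠ 0) (hb0 : b ≠ 0) : a * b ≠ 0 := by
  rcases S.P_total a ha ha0 with hp | hp <;> rcases S.P_total b hb hb0 with hq | hq
  · exact S.P_ne_zero _ (S.P_mul a hp b hq)
  · have := S.P_ne_zero _ (S.P_mul a hp _ hq)
    intro h; apply this; rw [mul_neg, h, neg_zero]
  · have := S.P_ne_zero _ (S.P_mul _ hp b hq)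
    intro h; apply this; rw [neg_mul, h, neg_zero]
  · have := S.P_ne_zero _ (S.P_mul _ hp _ hq)
    intro h; apply this; rw [neg_mul_neg, h]

lemma real_sq_eq_zero {a : C} (ha : S.conj a = a) (h : a * a = 0) : a = 0 := by
  by_contra h0
  exact S.real_mul_ne ha ha h0 h0 h

lemma nn_add_eq_zero {a b : C} (ha : S.nonneg a) (hb : S.nonneg b) (h : a + b = 0) :
    a = 0 ∧ b = 0 := by
  have hna : -a = b := by linear_combination -h
  have ha0 : a = 0 := S.nn_antisymm ha (hna ▸ hb)
  exact ⟨ha0, by rw [← hna, ha0, neg_zero]⟩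

lemma conj_mul_self_nn (z : C) : S.nonneg (S.conj z * z) := by
  obtain ⟨a, b, ha, hb, rfl⟩ := S.exists_re_im z
  have key : S.conj (a + S.i * b) * (a + S.i * b) = a * a + b * b := by
    rw [map_add, map_mul, S.conj_i, ha, hb]
    linear_combination (-(b * b)) * S.i_mul_i
  rw [key]
  exact S.nn_add (S.sq_nn ha) (S.sq_nn hb)

end OrderedScalars

open scoped Pointwise

set_option maxHeartbeats 1000000 in
/-- Let `Λ(Cⁿ)` be the Grassmann algebra over `C = R(i)` with the
`*`-involution determined by `1* = 1` and `eᵢ* = eᵢ` on the canonical generators (a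
`C`-antilinear involutive anti-automorphism).  A linear functional `ω : Λ(Cⁿ) → C` is
positive iff `ω(1) ≥ 0` and `ω(e_{i₁} ∧ ⋯ ∧ e_{i_r}) = 0` for all `r ≥ 1` and all
indices `i₁, …, i_r`. -/
theorem grassmann_positive_functional_iff
    {C : Type*} [CommRing C] [Nontrivial C] (S : OrderedScalars C)
    -- `1/2 ∈ R`
    (h : C) (h_real : S.conj h = h) (h_half : h + h = 1)
    (n : ℕ)
    -- the `*`-involution on the Grassmann algebra
    (st : ExteriorAlgebra C (Fin n → C) → ExteriorAlgebra C (Fin n → C))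
    (st_add : ∀ x y, st (x + y) = st x + st y)
    (st_mul : ∀ x y, st (x * y) = st y * st x)
    (st_st : ∀ x, st (st x) = x)
    (st_smul : ∀ (c : C) x, st (c • x) = S.conj c • st x)
    (st_gen : ∀ k : Fin n,
      st (ExteriorAlgebra.ι C (Pi.single k (1 : C))) =
        ExteriorAlgebra.ι C (Pi.single k (1 : C)))
    (ω : ExteriorAlgebra C (Fin n → C) →ₗ[C] C) :
    (∀ x, S.nonneg (ω (st x * x))) ↔
      (S.nonneg (ω 1) ∧
        ∀ (r : ℕ), 1 ≤ r → ∀ idx : Fin r → Fin n,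
          ω ((List.ofFn fun j => ExteriorAlgebra.ι C (Pi.single (idx j) (1 : C))).prod) = 0) := by

  let e : Fin n → ExteriorAlgebra C (Fin n → C) := fun k => ExteriorAlgebra.ι C (Pi.single k (1 : C))
  -- basic properties of `st`
  have st_one : st 1 = 1 := by
    have k1 : ∀ x, st x = st 1 * st x := fun x => by
      conv_lhs => rw [← mul_one x]
      rw [st_mul x 1]
    have := k1 (st 1)
    rw [st_st, mul_one] at this
    exact this.symm
  have st_zero : st 0 = 0 := by
    have := st_add 0 0
    rw [add_zero] at this
    exact left_eq_add.mp this
  have st_listprod : ∀ l : List (ExteriorAlgebra C (Fin n → C)), (∀ a ∈ l, st a = a) → st l.prod = l.reverse.prod := by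
    intro l
    induction l with
    | nil => intro _; simpa using st_one
    | cons a t ih =>
      intro hmem
      rw [List.prod_cons, st_mul, ih (fun b hb => hmem b (List.mem_cons_of_mem a hb)),
        hmem a List.mem_cons_self, List.reverse_cons, List.prod_append,
        List.prod_cons, List.prod_nil, mul_one]
  have st_alg : ∀ c : C, st (algebraMap C _ c) = algebraMap C _ (S.conj c) := by
    intro c
    rw [Algebra.algebraMap_eq_smul_one, st_smul, st_one, Algebra.algebraMap_eq_smul_one]
  have ω_alg : ∀ c : C, ω (algebraMap C _ c) = c * ω 1 := by
    intro c
    rw [Algebra.algebraMap_eq_smul_one, map_smul, smul_eq_mul]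
  constructor
  · -- positivity ⇒ vanishing
    intro hpos
    have hω1 : S.nonneg (ω 1) := by
      have := hpos 1
      rwa [st_one, one_mul] at this
    refine ⟨hω1, ?_⟩
    intro r hr idx
    obtain ⟨s, rfl⟩ : ∃ s, r = s + 1 := ⟨r - 1, by omega⟩
    set l := List.ofFn fun j => e (idx j) with hl
    set M := l.prod with hMdef
    set M' := l.reverse.prod with hM'def
    show ω M = 0
    have hstM : st M = M' := by
      refine st_listprod l ?_
      intro a ha
      rw [hl, List.mem_ofFn] at ha
      obtain ⟨j, rfl⟩ := ha
      exact st_gen (idx j)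
    have hMM : M' * M = 0 := by
      rw [hMdef, hM'def, hl, List.ofFn_succ, List.reverse_cons, List.prod_append,
        List.prod_cons, List.prod_cons, List.prod_nil, mul_one, mul_assoc,
        ← mul_assoc (e (idx 0)) (e (idx 0)), ExteriorAlgebra.ι_sq_zero, zero_mul, mul_zero]
    set α := ω M with hα
    set β := ω M' with hβ
    have hK : ∀ c : C, S.nonneg (ω 1 + c * α + S.conj c * β) := by
      intro c
      have hx := hpos (1 + c • M)
      have hst : st (1 + c • M) = 1 + S.conj c • M' := by
        rw [st_add, st_one, st_smul, hstM]
      have hmul : st (1 + c • M) * (1 + c • M) = 1 + c • M + S.conj c • M' := by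
        rw [hst]
        simp only [add_mul, mul_add, one_mul, mul_one, smul_mul_assoc,
          mul_smul_comm, smul_smul, hMM, smul_zero, mul_zero, add_zero]
        abel
      rw [hmul] at hx
      simpa [smul_eq_mul, add_assoc] using hx
    -- scalar analysis
    have hrω1 : S.conj (ω 1) = ω 1 := S.nn_real hω1
    set u := α + β with hu
    set w := S.i * (α - β) with hw
    have c1 : S.conj (1 : C) = 1 := map_one S.conj
    have hu_real : S.conj u = u := by
      have e1 := S.nn_real (hK 1)
      rw [map_add, map_add, map_mul, map_mul, S.conj_conj, c1, hrω1] at e1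
      rw [hu, map_add]
      linear_combination e1
    have hw_real : S.conj w = w := by
      have e1 := S.nn_real (hK S.i)
      rw [map_add, map_add, map_mul, map_mul, S.conj_conj, S.conj_i, hrω1] at e1
      rw [hw, map_mul, map_sub, S.conj_i]
      linear_combination e1
    have h2α : α + α = u - S.i * w := by
      rw [hu, hw]; linear_combination (α - β) * S.i_mul_i
    have h2β : β + β = u + S.i * w := by
      rw [hu, hw]; linear_combination (β - α) * S.i_mul_i
    have hαval : α = h * (u - S.i * w) := by linear_combination h * h2α - α * h_half
    have hβval : β = h * (u + S.i * w) := by linear_combination h * h2β - β * h_half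
    have hKt : ∀ t : C, S.conj t = t → S.nonneg (ω 1 + t * u) := by
      intro t ht
      have h0 := hK t
      rwa [show ω 1 + t * α + S.conj t * β = ω 1 + t * u by rw [ht, hu]; ring] at h0
    have hKit : ∀ t : C, S.conj t = t → S.nonneg (ω 1 + t * w) := by
      intro t ht
      have h0 := hK (S.i * t)
      rwa [show ω 1 + S.i * t * α + S.conj (S.i * t) * β = ω 1 + t * w by
        rw [map_mul, S.conj_i, ht, hw]; ring] at h0
    -- Cauchy–Schwarz step
    have hCS : S.nonneg (-(ω 1 * (α * β))) := by
      have hx := hpos (ω 1 • M + (-α) • 1)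
      have hst : st (ω 1 • M + (-α) • 1) = ω 1 • M' + S.conj (-α) • 1 := by
        rw [st_add, st_smul, hstM, st_smul, st_one, hrω1]
      have hmul : st (ω 1 • M + (-α) • 1) * (ω 1 • M + (-α) • 1) =
          (ω 1 * ω 1) • (M' * M) + (ω 1 * -α) • M' + (S.conj (-α) * ω 1) • M
            + (S.conj (-α) * -α) • (1 : ExteriorAlgebra C (Fin n → C)) := by
        rw [hst]
        simp only [add_mul, mul_add, smul_add, smul_mul_assoc, mul_smul_comm, smul_smul, one_mul, mul_one]
        module
      rw [hmul, hMM, smul_zero] at hx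
      simp only [map_add, map_smul, map_zero, smul_eq_mul, zero_add, map_neg, map_one] at hx
      have : ω 1 * -α * ω M' + -S.conj α * ω 1 * ω M + -S.conj α * -α * ω 1
          = -(ω 1 * (α * β)) := by
        rw [← hα, ← hβ]; ring
      rwa [this] at hx
    have huu : S.nonneg (u * u) := S.sq_nn hu_real
    have hww : S.nonneg (w * w) := S.sq_nn hw_real
    have hhh : S.nonneg (h * h) := S.sq_nn h_real
    have key : -(ω 1 * (α * β)) = -(ω 1 * (h * h * (u * u + w * w))) := by
      rw [hαval, hβval]
      linear_combination (ω 1 * h * h * w * w) * S.i_mul_i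
    rw [key] at hCS
    have hpos2 : S.nonneg (ω 1 * (h * h * (u * u + w * w))) :=
      S.nn_mul hω1 (S.nn_mul hhh (S.nn_add huu hww))
    have hzero : ω 1 * (h * h * (u * u + w * w)) = 0 := S.nn_antisymm hpos2 hCS
    have hu0 : u = 0 ∧ w = 0 := by
      by_cases hω0 : ω 1 = 0
      · constructor
        · have h1 := hKt 1 (map_one S.conj)
          have h2 := hKt (-1) (by rw [map_neg, map_one])
          rw [hω0, zero_add, one_mul] at h1
          rw [hω0, zero_add] at h2
          have := S.nn_antisymm h1 (by rwa [show -u = -1 * u by ring])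
          exact this
        · have h1 := hKit 1 (map_one S.conj)
          have h2 := hKit (-1) (by rw [map_neg, map_one])
          rw [hω0, zero_add, one_mul] at h1
          rw [hω0, zero_add] at h2
          exact S.nn_antisymm h1 (by rwa [show -w = -1 * w by ring])
      · have hh0 : h ≠ 0 := by
          intro h0
          rw [h0, add_zero] at h_half
          exact one_ne_zero h_half.symm
        have hX_real : S.conj (h * h * (u * u + w * w)) = h * h * (u * u + w * w) := by
          simp [map_mul, map_add, h_real, hu_real, hw_real]
        have hX0 : h * h * (u * u + w * w) = 0 := by
          by_contra hX
          exact S.real_mul_ne hrω1 hX_real hω0 hX hzero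
        have hsum0 : u * u + w * w = 0 := by
          by_contra hS
          have hS_real : S.conj (u * u + w * w) = u * u + w * w := by
            simp [map_mul, map_add, hu_real, hw_real]
          exact S.real_mul_ne (by simp [map_mul, h_real]) hS_real
            (S.real_mul_ne h_real h_real hh0 hh0) hS hX0
        obtain ⟨huu0, hww0⟩ := S.nn_add_eq_zero huu hww hsum0
        exact ⟨S.real_sq_eq_zero hu_real huu0, S.real_sq_eq_zero hw_real hww0⟩
    rw [hαval, hu0.1, hu0.2, mul_zero, sub_zero, mul_zero]
  · -- vanishing ⇒ positivity
    rintro ⟨hω1, hvan⟩ x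
    set G : Set (ExteriorAlgebra C (Fin n → C)) :=
      {x | ∃ l : List (ExteriorAlgebra C (Fin n → C)),
        l ≠ [] ∧ (∀ a ∈ l, ∃ k : Fin n, a = e k) ∧ x = l.prod} with hG
    set J : Submodule C (ExteriorAlgebra C (Fin n → C)) := Submodule.span C G with hJ
    -- ω vanishes on G
    have ωG : ∀ g ∈ G, ω g = 0 := by
      rintro g ⟨l, hne, hgen, rfl⟩
      choose idx hidx using fun i : Fin l.length => hgen (l.get i) (l.get_mem i)
      have hlen : 1 ≤ l.length := List.length_pos_iff.mpr hne
      have hl : l = List.ofFn fun i => e (idx i) := by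
        conv_lhs => rw [← List.ofFn_get l]
        exact congrArg List.ofFn (funext hidx)
      rw [hl]
      exact hvan l.length hlen idx
    have ωJ : ∀ y ∈ J, ω y = 0 := by
      intro y hy
      have : J ≤ LinearMap.ker ω := Submodule.span_le.mpr fun g hg => ωG g hg
      exact this hy
    -- J is closed under st
    have stJ : ∀ y ∈ J, st y ∈ J := by
      intro y hy
      induction hy using Submodule.span_induction with
      | mem g hg =>
        obtain ⟨l, hne, hgen, rfl⟩ := hg
        have hst : st l.prod = l.reverse.prod := by
          refine st_listprod l fun a ha => ?_
          obtain ⟨k, rfl⟩ := hgen a ha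
          exact st_gen k
        rw [hst]
        refine Submodule.subset_span ⟨l.reverse, ?_, ?_, rfl⟩
        · simpa using hne
        · intro a ha
          exact hgen a (List.mem_reverse.mp ha)
      | zero => rw [st_zero]; exact J.zero_mem
      | add a b _ _ ha hb => rw [st_add]; exact J.add_mem ha hb
      | smul c a _ ha => rw [st_smul]; exact J.smul_mem _ ha
    -- J is closed under multiplication
    have mulJ : ∀ y ∈ J, ∀ z ∈ J, y * z ∈ J := by
      have hGG : G * G ⊆ G := by
        rintro g ⟨g1, hg1, g2, hg2, rfl⟩
        obtain ⟨l1, hne1, hgen1, rfl⟩ := hg1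
        obtain ⟨l2, hne2, hgen2, rfl⟩ := hg2
        refine ⟨l1 ++ l2, by simp [hne1], ?_, (List.prod_append).symm⟩
        intro a ha
        rcases List.mem_append.mp ha with ha | ha
        · exact hgen1 a ha
        · exact hgen2 a ha
      intro y hy z hz
      have hle : J * J ≤ J := by
        rw [hJ, Submodule.span_mul_span]
        exact Submodule.span_mono hGG
      exact hle (Submodule.mul_mem_mul hy hz)
    -- decomposition of an arbitrary element
    have decomp : ∀ x : ExteriorAlgebra C (Fin n → C),
        ∃ c : C, ∃ j ∈ J, x = algebraMap C _ c + j := by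
      intro x
      induction x using ExteriorAlgebra.induction with
      | algebraMap r => exact ⟨r, 0, J.zero_mem, (add_zero _).symm⟩
      | ι m =>
        refine ⟨0, ExteriorAlgebra.ι C m, ?_, by rw [map_zero, zero_add]⟩
        have hm : m = ∑ k : Fin n, m k • (Pi.single k (1 : C) : Fin n → C) := by
          ext j
          simp [Pi.single_apply]
        have : ExteriorAlgebra.ι C m = ∑ k : Fin n, m k • e k := by
          conv_lhs => rw [hm]
          rw [map_sum]
          simp only [map_smul]
          rfl
        rw [this]
        refine Submodule.sum_mem _ fun k _ => Submodule.smul_mem _ _ ?_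
        exact Submodule.subset_span ⟨[e k], by simp, by simp, by simp⟩
      | mul a b iha ihb =>
        obtain ⟨c, j, hj, rfl⟩ := iha
        obtain ⟨d, k, hk, rfl⟩ := ihb
        refine ⟨c * d, algebraMap C _ c * k + j * algebraMap C _ d + j * k, ?_, by
          rw [map_mul]; noncomm_ring⟩
        refine J.add_mem (J.add_mem ?_ ?_) (mulJ j hj k hk)
        · rw [← Algebra.smul_def]
          exact J.smul_mem _ hk
        · rw [← Algebra.commutes, ← Algebra.smul_def]
          exact J.smul_mem _ hj
      | add a b iha ihb =>
        obtain ⟨c, j, hj, rfl⟩ := iha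
        obtain ⟨d, k, hk, rfl⟩ := ihb
        exact ⟨c + d, j + k, J.add_mem hj hk, by rw [map_add]; abel⟩
    -- conclude
    obtain ⟨c, j, hj, rfl⟩ := decomp x
    have hstx : st (algebraMap C _ c + j) = algebraMap C _ (S.conj c) + st j := by
      rw [st_add, st_alg]
    have hωprod : ω (st (algebraMap C _ c + j) * (algebraMap C _ c + j))
        = S.conj c * c * ω 1 := by
      rw [hstx, add_mul, mul_add, mul_add, ← map_mul, map_add, map_add, map_add, ω_alg]
      have e1 : ω (algebraMap C _ (S.conj c) * j) = 0 := by
        refine ωJ _ ?_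
        rw [← Algebra.smul_def]
        exact J.smul_mem _ hj
      have e2 : ω (st j * algebraMap C _ c) = 0 := by
        refine ωJ _ ?_
        rw [← Algebra.commutes, ← Algebra.smul_def]
        exact J.smul_mem _ (stJ j hj)
      have e3 : ω (st j * j) = 0 := ωJ _ (mulJ _ (stJ j hj) _ hj)
      rw [e1, e2, e3]
      ring
    rw [hωprod]
    exact S.nn_mul (S.conj_mul_self_nn c) hω1
end

section
/- Let A be a *-algebra over C = R(i) with sufficiently many positive linear functionals. If H ∈ A is a normal element (H*H = HH*) with Hⁿ = 0 for some n ≥ 1, then H = 0. -/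
section Aux

variable {C : Type*} [CommRing C] (S : OrderedScalars C)

lemma aux_half {h : C} (h_half : h + h = 1) {x : C} (hx : x + x = 0) : x = 0 := by
  have e : (h + h) * x = h * (x + x) := by ring
  rw [h_half, one_mul, hx, mul_zero] at e
  exact e

lemma aux_nonneg_antisymm {a : C} (ha : S.nonneg a) (ha' : S.nonneg (-a)) : a = 0 := by
  rcases ha with hp | rfl
  · rcases ha' with hp' | h0
    · exact absurd hp' (S.P_asymm _ hp)
    · exact neg_eq_zero.mp h0
  · rfl

lemma aux_key {a b : C} (ha : S.nonneg a) (hb : S.conj b = b)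
    (hk : S.nonneg (-(a * (b * b)))) : a = 0 ∨ b = 0 := by
  by_contra hc
  push_neg at hc
  obtain ⟨ha0, hb0⟩ := hc
  have hap : a ∈ S.P := ha.resolve_right ha0
  have hbb : b * b ∈ S.P := by
    rcases S.P_total b hb hb0 with h1 | h1
    · exact S.P_mul _ h1 _ h1
    · have := S.P_mul _ h1 _ h1
      simpa using this
  have hp : a * (b * b) ∈ S.P := S.P_mul _ hap _ hbb
  rcases hk with h1 | h1
  · exact S.P_asymm _ hp h1
  · exact S.P_ne_zero _ hp (neg_eq_zero.mp h1)

variable {S}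
variable {A : Type*} [Ring A] [Algebra C A] (T : StarAlgebraOn S A)

lemma aux_st_one : T.st 1 = 1 := by
  have h1 : T.st (T.st 1 * 1) = T.st 1 * T.st (T.st 1) := T.st_mul _ _
  rw [mul_one, T.st_st, mul_one] at h1
  exact h1.symm

lemma aux_st_zero : T.st 0 = 0 := by
  have h1 : T.st (0 + 0) = T.st 0 + T.st 0 := T.st_add 0 0
  rw [add_zero] at h1
  exact (left_eq_add.mp h1)

lemma aux_st_neg (x : A) : T.st (-x) = -T.st x := by
  have h1 : T.st (x + -x) = T.st x + T.st (-x) := T.st_add _ _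
  rw [add_neg_cancel, aux_st_zero] at h1
  exact eq_neg_of_add_eq_zero_right h1.symm

lemma aux_st_sub (x y : A) : T.st (x - y) = T.st x - T.st y := by
  rw [sub_eq_add_neg, T.st_add, aux_st_neg, sub_eq_add_neg]

lemma aux_st_pow (K : A) (hK : T.st K = K) : ∀ m : ℕ, T.st (K ^ m) = K ^ m := by
  intro m
  induction m with
  | zero => rw [pow_zero]; exact aux_st_one T
  | succ m ih => rw [pow_succ, T.st_mul, hK, ih, ← pow_succ', pow_succ]

end Aux

section Aux2

variable {C : Type*} [CommRing C] {S : OrderedScalars C}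
variable {A : Type*} [Ring A] [Algebra C A] (T : StarAlgebraOn S A)

lemma aux_vanish_sq (h : C) (h_real : S.conj h = h) (h_half : h + h = 1)
    (K : A) (hK : T.st K = K) (hK2 : K * K = 0)
    (ω : A →ₗ[C] C) (hpos : ∀ y, S.nonneg (ω (T.st y * y))) : ω K = 0 := by
  set a := ω 1 with ha_def
  set b := ω K with hb_def
  have st1 := aux_st_one T
  have ha : S.nonneg a := by
    have := hpos 1
    rwa [st1, one_mul] at this
  have h1 : S.nonneg (a + (b + b)) := by
    have hp := hpos (1 + K)
    rw [T.st_add, st1, hK] at hp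
    have e : ((1 : A) + K) * (1 + K) = 1 + (K + K) := by
      simp only [mul_add, add_mul, one_mul, mul_one, hK2, add_zero]
      abel
    rw [e, map_add, map_add] at hp
    exact hp
  have h2 : S.nonneg (a + -(b + b)) := by
    have hp := hpos (1 - K)
    rw [aux_st_sub, st1, hK] at hp
    have e : ((1 : A) - K) * (1 - K) = 1 + -(K + K) := by
      simp only [sub_mul, mul_sub, one_mul, mul_one, hK2]
      abel
    rw [e, map_add, map_neg, map_add] at hp
    exact hp
  have areal : S.conj a = a := aux_nonneg_real S ha
  have breal : S.conj b = b := by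
    have h12 := aux_nonneg_real S h1
    rw [map_add, map_add, areal] at h12
    have h13 : S.conj b + S.conj b = b + b := add_left_cancel h12
    have h14 : (S.conj b - b) + (S.conj b - b) = 0 := by
      rw [sub_add_sub_comm, h13, sub_self]
    exact sub_eq_zero.mp (aux_half h_half h14)
  have h3 : S.nonneg (-(a * (b * b))) := by
    have hp := hpos (b • 1 - a • K)
    rw [aux_st_sub, T.st_smul, T.st_smul, st1, hK, breal, areal] at hp
    have e : ((b : C) • (1 : A) - a • K) * (b • 1 - a • K)
        = (b * b) • (1 : A) - (b * a) • K - ((a * b) • K - (a * a) • (K * K)) := by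
      simp only [sub_mul, mul_sub, smul_mul_assoc, mul_smul_comm, smul_smul, smul_sub,
        one_mul, mul_one]
    have hv : ω ((b • (1 : A) - a • K) * (b • 1 - a • K)) = -(a * (b * b)) := by
      rw [e, hK2, smul_zero, sub_zero, map_sub, map_sub, map_smul, map_smul, map_smul]
      simp only [smul_eq_mul, ← ha_def, ← hb_def]
      ring
    rwa [hv] at hp
  rcases aux_key S ha breal h3 with h4 | h4
  · rw [h4, zero_add] at h1 h2
    exact aux_half h_half (aux_nonneg_antisymm S h1 h2)
  · exact h4

end Aux2

section Aux3

variable {C : Type*} [CommRing C] {S : OrderedScalars C}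
variable {A : Type*} [Ring A] [Algebra C A] (T : StarAlgebraOn S A)

lemma aux_vanish_H (h : C) (h_real : S.conj h = h) (h_half : h + h = 1)
    (H : A) (hKH : T.st H * H = 0) (hHK : H * T.st H = 0)
    (ω : A →ₗ[C] C) (hpos : ∀ y, S.nonneg (ω (T.st y * y))) :
    ω H = 0 ∧ ω (T.st H) = 0 := by
  set a := ω 1 with ha_def
  set u := ω H with hu_def
  set v := ω (T.st H) with hv_def
  have st1 := aux_st_one T
  have ha : S.nonneg a := by
    have := hpos 1
    rwa [st1, one_mul] at this
  have areal : S.conj a = a := aux_nonneg_real S ha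
  -- step 1 : u + v = 0
  have e1 : S.nonneg (a + (u + v)) := by
    have hp := hpos (1 + H)
    rw [T.st_add, st1] at hp
    have e : ((1 : A) + T.st H) * (1 + H) = 1 + (H + T.st H) := by
      simp only [mul_add, add_mul, one_mul, mul_one, hKH, add_zero]
      abel
    rw [e, map_add, map_add] at hp
    exact hp
  have e2 : S.nonneg (a + -(u + v)) := by
    have hp := hpos (1 - H)
    rw [aux_st_sub, st1] at hp
    have e : ((1 : A) - T.st H) * (1 - H) = 1 + -(H + T.st H) := by
      simp only [sub_mul, mul_sub, one_mul, mul_one, hKH]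
      abel
    rw [e, map_add, map_neg, map_add] at hp
    exact hp
  have sreal : S.conj (u + v) = u + v := by
    have h12 := aux_nonneg_real S e1
    rw [map_add, areal] at h12
    exact add_left_cancel h12
  have hs : u + v = 0 := by
    have e3 : S.nonneg (-(a * ((u + v) * (u + v)))) := by
      have caa : S.conj (a + a) = a + a := by rw [map_add, areal]
      have hp := hpos ((u + v) • 1 - (a + a) • H)
      rw [aux_st_sub, T.st_smul, T.st_smul, st1, sreal, caa] at hp
      have e : ((u + v) • (1 : A) - (a + a) • T.st H)
            * ((u + v) • 1 - (a + a) • H)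
          = ((u + v) * (u + v)) • (1 : A) - ((u + v) * (a + a)) • H
            - ((a + a) * (u + v)) • T.st H := by
        simp only [sub_mul, mul_sub, smul_mul_assoc, mul_smul_comm, smul_smul,
          smul_sub, one_mul, mul_one, hKH, smul_zero, sub_zero]
        module
      rw [e, map_sub, map_sub, map_smul, map_smul, map_smul] at hp
      have hv2 : ((u + v) * (u + v)) • a - ((u + v) * (a + a)) • u
          - ((a + a) * (u + v)) • v = -(a * ((u + v) * (u + v))) := by
        simp only [smul_eq_mul]
        ring
      rwa [hv2] at hp
    rcases aux_key S ha sreal e3 with h4 | h4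
    · rw [h4, zero_add] at e1 e2
      exact aux_nonneg_antisymm S e1 e2
    · exact h4
  -- step 2 : i*u - i*v = 0
  have f1 : S.nonneg (a + (S.i * u - S.i * v)) := by
    have hp := hpos (1 + S.i • H)
    rw [T.st_add, st1, T.st_smul, S.conj_i, neg_smul] at hp
    have e : ((1 : A) + -(S.i • T.st H)) * (1 + S.i • H)
        = 1 + (S.i • H - S.i • T.st H) := by
      simp only [mul_add, add_mul, neg_mul, mul_neg, one_mul, mul_one,
        smul_mul_assoc, mul_smul_comm, smul_smul, hKH, smul_zero, neg_zero,
        add_zero]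
      module
    rw [e, map_add, map_sub, map_smul, map_smul] at hp
    simpa only [smul_eq_mul] using hp
  have f2 : S.nonneg (a + -(S.i * u - S.i * v)) := by
    have hp := hpos (1 - S.i • H)
    rw [aux_st_sub, st1, T.st_smul, S.conj_i, neg_smul, sub_neg_eq_add] at hp
    have e : ((1 : A) + S.i • T.st H) * (1 - S.i • H)
        = 1 + -(S.i • H - S.i • T.st H) := by
      simp only [mul_sub, sub_mul, add_mul, mul_add, one_mul, mul_one,
        smul_mul_assoc, mul_smul_comm, smul_smul, hKH, smul_zero, sub_zero]
      module
    rw [e, map_add, map_neg, map_sub, map_smul, map_smul] at hp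
    simpa only [smul_eq_mul] using hp
  have rreal : S.conj (S.i * u - S.i * v) = S.i * u - S.i * v := by
    have h12 := aux_nonneg_real S f1
    rw [map_add, areal] at h12
    exact add_left_cancel h12
  have hr : S.i * u - S.i * v = 0 := by
    have f3 : S.nonneg (-(a * ((S.i * u - S.i * v) * (S.i * u - S.i * v)))) := by
      have cia : S.conj (S.i * (a + a)) = -(S.i * (a + a)) := by
        rw [map_mul, S.conj_i, map_add, areal, neg_mul]
      have hp := hpos ((S.i * u - S.i * v) • 1 - (S.i * (a + a)) • H)
      rw [aux_st_sub, T.st_smul, T.st_smul, st1, rreal, cia, neg_smul,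
        sub_neg_eq_add] at hp
      have e : ((S.i * u - S.i * v) • (1 : A) + (S.i * (a + a)) • T.st H)
            * ((S.i * u - S.i * v) • 1 - (S.i * (a + a)) • H)
          = ((S.i * u - S.i * v) * (S.i * u - S.i * v)) • (1 : A)
            - ((S.i * u - S.i * v) * (S.i * (a + a))) • H
            + ((S.i * (a + a)) * (S.i * u - S.i * v)) • T.st H := by
        simp only [sub_mul, mul_sub, add_mul, mul_add, smul_mul_assoc,
          mul_smul_comm, smul_smul, one_mul, mul_one, hKH, smul_zero, sub_zero,
          add_zero]
        module
      rw [e, map_add, map_sub, map_smul, map_smul, map_smul] at hp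
      have hv2 : ((S.i * u - S.i * v) * (S.i * u - S.i * v)) • a
          - ((S.i * u - S.i * v) * (S.i * (a + a))) • u
          + ((S.i * (a + a)) * (S.i * u - S.i * v)) • v
          = -(a * ((S.i * u - S.i * v) * (S.i * u - S.i * v))) := by
        simp only [smul_eq_mul]
        ring
      rwa [hv2] at hp
    rcases aux_key S ha rreal f3 with h4 | h4
    · rw [h4, zero_add] at f1 f2
      exact aux_nonneg_antisymm S f1 f2
    · exact h4
  -- combine
  have huv : u = v := by
    have h6 : S.i * (S.i * u - S.i * v) = 0 := by rw [hr, mul_zero]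
    have hii := S.i_mul_i
    have h7 : v - u = 0 := by linear_combination h6 + (v - u) * hii
    linear_combination -h7
  have hu : u = 0 := by
    apply aux_half h_half
    rw [huv] at hs ⊢
    exact hs
  exact ⟨hu, by rw [← huv]; exact hu⟩

end Aux3

section Aux4

variable {C : Type*} [CommRing C] {S : OrderedScalars C}
variable {A : Type*} [Ring A] [Algebra C A] (T : StarAlgebraOn S A)

lemma aux_herm_nilpotent (h : C) (h_real : S.conj h = h) (h_half : h + h = 1)
    (hsm : ∀ x : A, T.st x = x → x ≠ 0 →
      ∃ ω : A →ₗ[C] C, (∀ y : A, S.nonneg (ω (T.st y * y))) ∧ ω x ≠ 0) :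
    ∀ n : ℕ, 1 ≤ n → ∀ K : A, T.st K = K → K ^ n = 0 → K = 0 := by
  have base : ∀ K : A, T.st K = K → K * K = 0 → K = 0 := by
    intro K hK hK2
    by_contra h0
    obtain ⟨ω, hpos, hω⟩ := hsm K hK h0
    exact hω (aux_vanish_sq T h h_real h_half K hK hK2 ω hpos)
  intro n
  induction n using Nat.strong_induction_on with
  | _ n IH =>
    intro hn K hK hKn
    rcases eq_or_lt_of_le hn with h1 | h1
    · rwa [← h1, pow_one] at hKn
    · have h2 : 2 ≤ n := h1
      have h3 : (K ^ (n - 1)) * (K ^ (n - 1)) = 0 := by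
        rw [← pow_add]
        have e : (n - 1) + (n - 1) = n + (n - 2) := by omega
        rw [e, pow_add, hKn, zero_mul]
      have h4 : K ^ (n - 1) = 0 :=
        base (K ^ (n - 1)) (aux_st_pow T K hK (n - 1)) h3
      exact IH (n - 1) (by omega) (by omega) K hK h4

end Aux4


/-- Let `A` be a `*`-algebra over `C = R(i)` (with `1/2 ∈ R`) having
sufficiently many positive linear functionals.  If `H ∈ A` is normal (`H*H = HH*`) with
`Hⁿ = 0` for some `n ≥ 1`, then `H = 0`. -/
theorem sufficiently_many_normal_nilpotent_eq_zero
    {C : Type*} [CommRing C] [Nontrivial C] (S : OrderedScalars C)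
    {A : Type*} [Ring A] [Algebra C A] (T : StarAlgebraOn S A)
    -- `1/2 ∈ R`
    (h : C) (h_real : S.conj h = h) (h_half : h + h = 1)
    -- sufficiently many positive linear functionals
    (hsm : ∀ x : A, T.st x = x → x ≠ 0 →
      ∃ ω : A →ₗ[C] C, (∀ y : A, S.nonneg (ω (T.st y * y))) ∧ ω x ≠ 0) :
    ∀ H : A, T.st H * H = H * T.st H → ∀ n : ℕ, 1 ≤ n → H ^ n = 0 → H = 0 := by
  intro H hcomm n hn hpow
  -- `K = H* H` is Hermitian and nilpotent, hence zero
  have stK : T.st (T.st H * H) = T.st H * H := by rw [T.st_mul, T.st_st]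
  have hco : Commute (T.st H) H := hcomm
  have Kn : (T.st H * H) ^ n = 0 := by
    rw [hco.mul_pow, hpow, mul_zero]
  have hKH : T.st H * H = 0 :=
    aux_herm_nilpotent T h h_real h_half hsm n hn (T.st H * H) stK Kn
  have hHK : H * T.st H = 0 := by rw [← hcomm]; exact hKH
  -- every positive functional kills `H` and `H*`
  have hvan : ∀ ω : A →ₗ[C] C, (∀ y : A, S.nonneg (ω (T.st y * y))) →
      ω H = 0 ∧ ω (T.st H) = 0 :=
    fun ω hpos => aux_vanish_H T h h_real h_half H hKH hHK ω hpos
  -- real part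
  have stX : T.st (h • (H + T.st H)) = h • (H + T.st H) := by
    rw [T.st_smul, T.st_add, T.st_st, h_real, add_comm (T.st H) H]
  have hX : h • (H + T.st H) = 0 := by
    by_contra h0
    obtain ⟨ω, hpos, hω⟩ := hsm _ stX h0
    obtain ⟨hu, hv⟩ := hvan ω hpos
    exact hω (by rw [map_smul, map_add, hu, hv, add_zero, smul_zero])
  -- imaginary part
  have stY : T.st (h • (S.i • (T.st H - H))) = h • (S.i • (T.st H - H)) := by
    rw [T.st_smul, T.st_smul, S.conj_i, h_real, aux_st_sub, T.st_st, neg_smul,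
      ← smul_neg, neg_sub]
  have hY : h • (S.i • (T.st H - H)) = 0 := by
    by_contra h0
    obtain ⟨ω, hpos, hω⟩ := hsm _ stY h0
    obtain ⟨hu, hv⟩ := hvan ω hpos
    exact hω (by rw [map_smul, map_smul, map_sub, hu, hv, sub_zero, smul_zero,
      smul_zero])
  -- recombine : H = X + i • Y
  have hrec : H = h • (H + T.st H) + S.i • (h • (S.i • (T.st H - H))) := by
    rw [smul_comm S.i h, smul_smul S.i S.i, S.i_mul_i, neg_one_smul, neg_sub, ← smul_add]
    have e : (H + T.st H) + (H - T.st H) = H + H := by abel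
    rw [e, smul_add, ← add_smul, h_half, one_smul]
  rw [hrec, hX, hY, smul_zero, add_zero]
end

section
/- Let A be a *-algebra over C and define an action of the involution on Hochschild n-cochains by φ*(A₁ ⊗ ... ⊗ Aₙ) := (φ(Aₙ* ⊗ ... ⊗ A₁*))*. Then for an n-cochain φ and m-cochain ψ, the Gerstenhaber product satisfies (φ ⋄ ψ)* = (-1)^{(n-1)(m-1)} φ* ⋄ ψ*. -/
/-- Hochschild `n`-cochains of the algebra `A` (with values in `A`). -/
def Cochain (A : Type*) (n : ℕ) := (Fin n → A) → A

/-- The Gerstenhaber product `φ ⋄ ψ` of an `n`-cochain `φ` and an `m`-cochain `ψ`: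
`(φ ⋄ ψ)(A₁,…,A_{n+m-1}) = Σ_{i=1}^{n} (-1)^{(i-1)(m-1)} φ(A₁,…,A_{i-1}, ψ(Aᵢ,…,A_{i+m-1}), A_{i+m},…)`. -/
def gerst {A : Type*} [Ring A] {n m : ℕ} (φ : Cochain A n) (ψ : Cochain A m) :
    Cochain A (n + m - 1) := fun a =>
  ∑ i : Fin n, ((-1 : ℤ) ^ ((i : ℕ) * (m - 1))) •
    φ (fun j : Fin n =>
      if hlt : (j : ℕ) < (i : ℕ) then
        a ⟨(j : ℕ), by have hj := j.isLt; have hi := i.isLt; omega⟩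
      else if heq : (j : ℕ) = (i : ℕ) then
        ψ (fun k : Fin m =>
          a ⟨(i : ℕ) + (k : ℕ), by have hk := k.isLt; have hi := i.isLt; omega⟩)
      else
        a ⟨(j : ℕ) + m - 1, by have hj := j.isLt; omega⟩)

/-- Identification of cochain spaces of equal arity. -/
def reindex {A : Type*} {n m : ℕ} (h : n = m) (φ : Cochain A n) : Cochain A m :=
  fun a => φ fun j => a (Fin.cast h j)

/-- The multiplication of `A` as a `2`-cochain `μ₀`. -/
def mul2 (A : Type*) [Ring A] : Cochain A 2 := fun a => a 0 * a 1

/-- The action of the `*`-involution on `n`-cochains: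
`φ*(A₁ ⊗ ⋯ ⊗ Aₙ) = (φ(Aₙ* ⊗ ⋯ ⊗ A₁*))*`. -/
def stC {C : Type*} [CommRing C] {S : OrderedScalars C}
    {A : Type*} [Ring A] [Algebra C A] (T : StarAlgebraOn S A)
    {n : ℕ} (φ : Cochain A n) : Cochain A n :=
  fun a => T.st (φ fun j => T.st (a j.rev))

/-- The Hochschild differential `δφ = (-1)^{n-1} [μ₀, φ]` of an `n`-cochain (`n = d + 1`),
where `[·,·]` is the Gerstenhaber bracket: `[μ₀, φ] = μ₀ ⋄ φ - (-1)^{(2-1)(n-1)} φ ⋄ μ₀`. -/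
def hdelta {A : Type*} [Ring A] {d : ℕ} (φ : Cochain A (d + 1)) : Cochain A (d + 2) :=
  fun a => ((-1 : ℤ) ^ d) •
    (reindex (by omega) (gerst (mul2 A) φ) a -
      ((-1 : ℤ) ^ d) • reindex (by omega) (gerst φ (mul2 A)) a)


/-- For an `n`-cochain `φ` and an `m`-cochain `ψ` of a `*`-algebra `A`
over `C` (here `n = d₁ + 1`, `m = d₂ + 1`), the Gerstenhaber product satisfies
`(φ ⋄ ψ)* = (-1)^{(n-1)(m-1)} φ* ⋄ ψ*`. -/
theorem star_gerstenhaber_product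
    {C : Type*} [CommRing C] (S : OrderedScalars C)
    {A : Type*} [Ring A] [Algebra C A] (T : StarAlgebraOn S A)
    {d₁ d₂ : ℕ} (φ : Cochain A (d₁ + 1)) (ψ : Cochain A (d₂ + 1)) :
    stC T (gerst φ ψ) =
      fun a => ((-1 : ℤ) ^ (d₁ * d₂)) • gerst (stC T φ) (stC T ψ) a := by
  funext a
  let F : A →+ A := AddMonoidHom.mk' T.st T.st_add
  have hF : ∀ x, T.st x = F x := fun _ => rfl
  show T.st (gerst φ ψ fun j => T.st (a j.rev)) =
      ((-1 : ℤ) ^ (d₁ * d₂)) • gerst (stC T φ) (stC T ψ) a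
  unfold gerst
  rw [hF, map_sum, Finset.smul_sum]
  refine Fintype.sum_equiv Fin.revPerm _ _ fun i => ?_
  rw [map_zsmul, smul_smul, ← pow_add]
  obtain ⟨t, ht⟩ : ∃ t, d₁ = (i : ℕ) + t := ⟨d₁ - i, by omega⟩
  have hrev : ((Fin.revPerm i : Fin (d₁ + 1)) : ℕ) = t := by
    show ((Fin.rev i : Fin (d₁ + 1)) : ℕ) = t
    rw [Fin.val_rev]; omega
  congr 1
  · rw [hrev]
    simp only [Nat.add_sub_cancel]
    obtain ⟨n, hn⟩ : ∃ n : ℕ, (i : ℕ) = n := ⟨_, rfl⟩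
    rw [hn] at ht ⊢
    subst ht
    rw [show (n + t) * d₂ + t * d₂ = n * d₂ + 2 * (t * d₂) by ring, pow_add, pow_mul]
    simp
  · refine congrArg T.st (congrArg φ (funext fun j => ?_))
    have hj := j.isLt
    have hi := i.isLt
    rcases lt_trichotomy (j : ℕ) (i : ℕ) with h | h | h
    · rw [dif_pos h]
      simp only [hrev, Fin.val_rev]
      rw [dif_neg (by omega), dif_neg (by omega)]
      exact congrArg T.st (congrArg a (Fin.ext (by simp [Fin.val_rev]; omega)))
    · rw [dif_neg (by omega), dif_pos h]
      simp only [hrev, Fin.val_rev]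
      rw [dif_neg (by omega), dif_pos (by omega)]
      show _ = T.st (stC T ψ _)
      unfold stC
      rw [T.st_st]
      refine congrArg ψ (funext fun k => ?_)
      have hk := k.isLt
      exact congrArg T.st (congrArg a (Fin.ext (by simp [Fin.val_rev]; omega)))
    · rw [dif_neg (by omega), dif_neg (by omega)]
      simp only [hrev, Fin.val_rev]
      rw [dif_pos (by omega)]
      exact congrArg T.st (congrArg a (Fin.ext (by simp [Fin.val_rev]; omega)))
end

section
/- Let A be a *-algebra over C = R(i) with sufficiently many positive linear functionals, and let (A[[λ]], μ, I) be a positive deformation of A. Then (A[[λ]], μ, I) has sufficiently many positive C[[λ]]-linear functionals. -/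
/-- The product of the deformed algebra `A[[λ]]`: for `μ = Σ λ^r μ_r` and formal series
`f = Σ λ^s f_s`, `g = Σ λ^t g_t`, the `n`-th coefficient of `μ(f ⊗ g)` is
`Σ_{r+s+t=n} μ_r(f_s, g_t)`. -/
def defMul {A : Type*} (mA : ℕ → A → A → A) [AddCommMonoid A] (f g : ℕ → A) : ℕ → A :=
  fun n => ∑ r ∈ Finset.range (n + 1), ∑ s ∈ Finset.range (n - r + 1),
    mA r (f s) (g (n - r - s))

/-- The involution of the deformed algebra `A[[λ]]` determined by `I = Σ λ^r I_r`. -/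
def defInv {A : Type*} (iA : ℕ → A → A) [AddCommMonoid A] (f : ℕ → A) : ℕ → A :=
  fun n => ∑ r ∈ Finset.range (n + 1), iA r (f (n - r))

/-- A formal series `c ∈ C[[λ]]` is `≥ 0` in the canonical order of `R[[λ]]`
(lowest nonvanishing coefficient positive) iff it is zero or its lowest nonvanishing
coefficient lies in the cone `P`. -/
def nonnegSeries {C : Type*} [CommRing C] (S : OrderedScalars C) (c : ℕ → C) : Prop :=
  (∀ n, c n = 0) ∨ ∃ n₀ : ℕ, (∀ m < n₀, c m = 0) ∧ c n₀ ∈ S.P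


/-- Let `A` be a `*`-algebra over `C = R(i)` with sufficiently many
positive linear functionals, and let `(A[[λ]], μ, I)` be a positive deformation of `A`.
Then the deformed algebra has sufficiently many positive `C[[λ]]`-linear functionals. -/
theorem positive_deformation_sufficiently_many
    {C : Type*} [CommRing C] [Nontrivial C] (S : OrderedScalars C)
    {A : Type*} [Ring A] [Algebra C A] (T : StarAlgebraOn S A)
    -- the deformed product `μ = Σ λ^r μ_r` …
    (mA : ℕ → A → A → A)
    (hm0 : ∀ x y : A, mA 0 x y = x * y)
    (hm_addl : ∀ r x x' y, mA r (x + x') y = mA r x y + mA r x' y)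
    (hm_addr : ∀ r x y y', mA r x (y + y') = mA r x y + mA r x y')
    (hm_smull : ∀ r (c : C) x y, mA r (c • x) y = c • mA r x y)
    (hm_smulr : ∀ r (c : C) x y, mA r x (c • y) = c • mA r x y)
    (hassoc : ∀ f g k : ℕ → A,
      defMul mA (defMul mA f g) k = defMul mA f (defMul mA g k))
    -- … and the deformed involution `I = Σ λ^r I_r`
    (iA : ℕ → A → A)
    (hi0 : ∀ x : A, iA 0 x = T.st x)
    (hi_add : ∀ r x x', iA r (x + x') = iA r x + iA r x')
    (hi_smul : ∀ r (c : C) x, iA r (c • x) = S.conj c • iA r x)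
    (hinv_inv : ∀ f : ℕ → A, defInv iA (defInv iA f) = f)
    (hinv_mul : ∀ f g : ℕ → A,
      defInv iA (defMul mA f g) = defMul mA (defInv iA g) (defInv iA f))
    -- the deformation is positive: every classically positive linear functional deforms
    -- into a positive functional of the deformed algebra
    (hposdef : ∀ ω₀ : A →ₗ[C] C, (∀ x : A, S.nonneg (ω₀ (T.st x * x))) →
      ∃ ω : ℕ → (A →ₗ[C] C), ω 0 = ω₀ ∧
        ∀ f : ℕ → A, nonnegSeries S
          (fun k => ∑ r ∈ Finset.range (k + 1), ω r (defMul mA (defInv iA f) f (k - r))))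
    -- `A` has sufficiently many positive linear functionals
    (hsm : ∀ x : A, T.st x = x → x ≠ 0 →
      ∃ ω₀ : A →ₗ[C] C, (∀ y : A, S.nonneg (ω₀ (T.st y * y))) ∧ ω₀ x ≠ 0) :
    -- conclusion: the deformed algebra has sufficiently many positive functionals
    ∀ F : ℕ → A, defInv iA F = F → F ≠ 0 →
      ∃ ω : ℕ → (A →ₗ[C] C),
        (∀ f : ℕ → A, nonnegSeries S
          (fun k => ∑ r ∈ Finset.range (k + 1), ω r (defMul mA (defInv iA f) f (k - r)))) ∧
        ∃ k : ℕ, (∑ r ∈ Finset.range (k + 1), ω r (F (k - r))) ≠ 0 := by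
  classical
  intro F hinvF hF
  have hiA0 : ∀ r, iA r (0 : A) = 0 := by
    intro r
    have h := hi_smul r 0 0
    simpa using h
  have hex : ∃ n, F n ≠ 0 := by
    by_contra h
    push_neg at h
    exact hF (funext fun n => h n)
  set n₀ := Nat.find hex with hn₀
  have hFn₀ : F n₀ ≠ 0 := Nat.find_spec hex
  have hFlt : ∀ m < n₀, F m = 0 := fun m hm => not_not.mp (Nat.find_min hex hm)
  have hherm : T.st (F n₀) = F n₀ := by
    have h := congrFun hinvF n₀
    unfold defInv at h
    rw [Finset.sum_eq_single 0] at h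
    · simpa [hi0] using h
    · intro r hr hr0
      have hrle : r ≤ n₀ := Nat.lt_succ_iff.mp (Finset.mem_range.mp hr)
      have : n₀ - r < n₀ := Nat.sub_lt (lt_of_lt_of_le (Nat.pos_of_ne_zero hr0) hrle)
        (Nat.pos_of_ne_zero hr0)
      rw [hFlt _ this, hiA0]
    · intro h0; simp at h0
  obtain ⟨ω₀, hpos₀, hne₀⟩ := hsm (F n₀) hherm hFn₀
  obtain ⟨ω, hω0, hωpos⟩ := hposdef ω₀ hpos₀
  refine ⟨ω, hωpos, n₀, ?_⟩
  rw [Finset.sum_eq_single 0]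
  · rw [Nat.sub_zero, hω0]; exact hne₀
  · intro r hr hr0
    have hrle : r ≤ n₀ := Nat.lt_succ_iff.mp (Finset.mem_range.mp hr)
    have : n₀ - r < n₀ := Nat.sub_lt (lt_of_lt_of_le (Nat.pos_of_ne_zero hr0) hrle)
      (Nat.pos_of_ne_zero hr0)
    rw [hFlt _ this, map_zero]
  · intro h0; simp at h0
end
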